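/- arXiv:1607.08148 — 7 statements merged into one kernel-verified Lean document; each statement's English description precedes it below -/
import Mathlib

section
/- For X ∈ gu(V) with α = α(X) satisfying 1 + α ≠ 0 and 1 + X invertible, the element c(X) = (1 − X/(1+α))(1+X)^{-1} satisfies c(X)·c(X)* = (1+α)^{-2}; in particular c(X) ∈ GU(V) with multiplier μ(c(X)) = (1+α)^{-2}. -/
/-!
With `P = 1 + X` and `Q = 1 - (1 + α)⁻¹ • X`, the relation `X + X* = α` (with `α` fixed by `τ`)
gives `P* = (1 + α) • Q` and `Q* = (1 + α)⁻¹ • P`. As `P` and `Q` commute,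
`c c* = Q P⁻¹ (P*)⁻¹ Q* = (1 + α)⁻² • Q P⁻¹ Q⁻¹ P = (1 + α)⁻²`.
Nondegeneracy of the ε-hermitian form makes `*` a `τ`-semilinear unital anti-homomorphism.
-/

namespace EpsHermitian

variable {E V : Type*} [Field E] [AddCommGroup V] {τ : E →+* E} {ε : E} {B : V → V → E}

theorem add_right (haddl : ∀ u v w : V, B (u + v) w = B u w + B v w)
    (hherm : ∀ v w : V, B v w = ε * τ (B w v)) (v u u' : V) :
    B v (u + u') = B v u + B v u' := by
  rw [hherm, haddl, map_add, mul_add, ← hherm, ← hherm]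

theorem smul_right [Module E V] (hsmull : ∀ (c : E) (v w : V), B (c • v) w = c * B v w)
    (hherm : ∀ v w : V, B v w = ε * τ (B w v)) (c : E) (v u : V) :
    B v (c • u) = τ c * B v u := by
  rw [hherm, hsmull, map_mul, hherm v u]
  ring

theorem eq_of_forall_eq_right (haddl : ∀ u v w : V, B (u + v) w = B u w + B v w)
    (hherm : ∀ v w : V, B v w = ε * τ (B w v)) (hε : ε ≠ 0)
    (hnd : ∀ v : V, (∀ w : V, B v w = 0) → v = 0) {u u' : V} (h : ∀ v, B v u = B v u') :
    u = u' := by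
  have hleft : ∀ v, B u v = B u' v := fun v =>
    τ.injective (mul_left_cancel₀ hε (by rw [← hherm, ← hherm, h]))
  refine sub_eq_zero.mp (hnd _ fun v => ?_)
  simpa [hleft] using haddl (u - u') u' v

end EpsHermitian

namespace FormAdjoint

variable {E V : Type*} [Field E] [AddCommGroup V] [Module E V] {B : V → V → E}
  {adj : (V →ₗ[E] V) → (V →ₗ[E] V)}

theorem eq_of_forall (hsep : ∀ u u' : V, (∀ v, B v u = B v u') → u = u')
    (hadj : ∀ (a : V →ₗ[E] V) (v w : V), B (a v) w = B v (adj a w)) {a f : V →ₗ[E] V}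
    (h : ∀ v w, B (a v) w = B v (f w)) : adj a = f :=
  LinearMap.ext fun w => hsep _ _ fun v => by rw [← hadj, h]

theorem map_one (hsep : ∀ u u' : V, (∀ v, B v u = B v u') → u = u')
    (hadj : ∀ (a : V →ₗ[E] V) (v w : V), B (a v) w = B v (adj a w)) : adj 1 = 1 :=
  eq_of_forall hsep hadj fun _ _ => rfl

theorem map_mul (hsep : ∀ u u' : V, (∀ v, B v u = B v u') → u = u')
    (hadj : ∀ (a : V →ₗ[E] V) (v w : V), B (a v) w = B v (adj a w)) (a b : V →ₗ[E] V) :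
    adj (a * b) = adj b * adj a :=
  eq_of_forall hsep hadj fun v w => by rw [Module.End.mul_apply, hadj, hadj, Module.End.mul_apply]

theorem map_add (hsep : ∀ u u' : V, (∀ v, B v u = B v u') → u = u')
    (hadj : ∀ (a : V →ₗ[E] V) (v w : V), B (a v) w = B v (adj a w))
    (haddl : ∀ u v w : V, B (u + v) w = B u w + B v w)
    (haddr : ∀ v u u' : V, B v (u + u') = B v u + B v u') (a b : V →ₗ[E] V) :
    adj (a + b) = adj a + adj b :=
  eq_of_forall hsep hadj fun v w => by
    rw [LinearMap.add_apply, haddl, hadj, hadj, LinearMap.add_apply, haddr]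

theorem map_smul {τ : E →+* E} (hτ : ∀ a : E, τ (τ a) = a)
    (hsep : ∀ u u' : V, (∀ v, B v u = B v u') → u = u')
    (hadj : ∀ (a : V →ₗ[E] V) (v w : V), B (a v) w = B v (adj a w))
    (hsmull : ∀ (c : E) (v w : V), B (c • v) w = c * B v w)
    (hsmulr : ∀ (c : E) (v u : V), B v (c • u) = τ c * B v u) (c : E) (a : V →ₗ[E] V) :
    adj (c • a) = τ c • adj a :=
  eq_of_forall hsep hadj fun v w => by
    rw [LinearMap.smul_apply, hsmull, hadj, LinearMap.smul_apply, hsmulr, hτ]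

end FormAdjoint

namespace SimilitudeCayley

variable {E A : Type*} [Field E] [Ring A] [Algebra E A] {adj : A → A}

theorem adj_one_add (hone : adj 1 = 1) (hadd : ∀ a b, adj (a + b) = adj a + adj b)
    {X : A} {α : E} (hX : X + adj X = α • 1) (hα : 1 + α ≠ 0) :
    adj (1 + X) = (1 + α) • (1 - (1 + α)⁻¹ • X) := by
  rw [hadd, hone, eq_sub_of_add_eq' hX, smul_sub, smul_smul, mul_inv_cancel₀ hα, one_smul,
    add_smul, one_smul]
  abel

theorem adj_one_sub_inv_smul {τ : E →+* E} (hone : adj 1 = 1)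
    (hadd : ∀ a b, adj (a + b) = adj a + adj b) (hsmul : ∀ (c : E) a, adj (c • a) = τ c • adj a)
    {X : A} {α : E} (hατ : τ α = α) (hX : X + adj X = α • 1) (hα : 1 + α ≠ 0) :
    adj (1 - (1 + α)⁻¹ • X) = (1 + α)⁻¹ • (1 + X) := by
  have hsub : adj (1 - (1 + α)⁻¹ • X) + adj ((1 + α)⁻¹ • X) = 1 := by
    rw [← hadd, sub_add_cancel, hone]
  rw [eq_sub_of_add_eq hsub, hsmul, map_inv₀, map_add, map_one, hατ, eq_sub_of_add_eq' hX]
  match_scalars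
  · field_simp
    ring
  · field_simp

theorem mul_ringInverse_mul_adj (hone : adj 1 = 1) (hmul : ∀ a b, adj (a * b) = adj b * adj a)
    {P Q : A} {s t : E} (hs : s ≠ 0) (hPQ : Commute P Q) (hP : IsUnit P)
    (hadjP : adj P = s • Q) (hadjQ : adj Q = t • P) :
    Q * Ring.inverse P * adj (Q * Ring.inverse P) = (s⁻¹ * t) • 1 := by
  obtain ⟨u, rfl⟩ := hP
  rw [Ring.inverse_unit]
  have hQadj : Q * adj ↑u⁻¹ = s⁻¹ • 1 := by
    have : s • (Q * adj ↑u⁻¹) = 1 := by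
      rw [← smul_mul_assoc, ← hadjP, ← hmul, Units.inv_mul, hone]
    rw [← this, smul_smul, inv_mul_cancel₀ hs, one_smul]
  calc Q * ↑u⁻¹ * adj (Q * ↑u⁻¹) = ↑u⁻¹ * (Q * adj ↑u⁻¹) * (t • ↑u) := by
        rw [hmul, hadjQ, hPQ.symm.units_inv_right.eq]
        noncomm_ring
    _ = (s⁻¹ * t) • 1 := by
        rw [hQadj, mul_smul_one, smul_mul_smul_comm, Units.inv_mul]

end SimilitudeCayley

open SimilitudeCayley in
theorem similitude_cayley_map_lands_in_GU_general
    {E V : Type*} [Field E] [AddCommGroup V] [Module E V]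
    (τ : E →+* E) (hτ : ∀ a : E, τ (τ a) = a)
    (ε : E) (hε : ε = 1 ∨ ε = -1)
    (B : V → V → E)
    (haddl : ∀ u v w : V, B (u + v) w = B u w + B v w)
    (hsmull : ∀ (c : E) (v w : V), B (c • v) w = c * B v w)
    (hherm : ∀ v w : V, B v w = ε * τ (B w v))
    (hnd : ∀ v : V, (∀ w : V, B v w = 0) → v = 0)
    (adj : (V →ₗ[E] V) → (V →ₗ[E] V))
    (hadj : ∀ (a : V →ₗ[E] V) (v w : V), B (a v) w = B v (adj a w))
    (X : V →ₗ[E] V) (α : E) (hατ : τ α = α)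
    (hX : X + adj X = α • (1 : V →ₗ[E] V))
    (hα : (1 : E) + α ≠ 0)
    (hXinv : IsUnit ((1 : V →ₗ[E] V) + X)) :
    ((1 - ((1 + α)⁻¹ : E) • X) * Ring.inverse (1 + X)) *
      adj ((1 - ((1 + α)⁻¹ : E) • X) * Ring.inverse (1 + X)) =
      (((1 + α)⁻¹ : E) ^ 2) • (1 : V →ₗ[E] V) := by
  have hε0 : ε ≠ 0 := by rcases hε with rfl | rfl <;> norm_num
  have hsep : ∀ u u' : V, (∀ v, B v u = B v u') → u = u' := fun _ _ =>
    EpsHermitian.eq_of_forall_eq_right haddl hherm hε0 hnd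
  have hone := FormAdjoint.map_one hsep hadj
  have hadd := FormAdjoint.map_add hsep hadj haddl (EpsHermitian.add_right haddl hherm)
  have hsmul := FormAdjoint.map_smul hτ hsep hadj hsmull (EpsHermitian.smul_right hsmull hherm)
  have hcomm : Commute (1 + X) (1 - (1 + α)⁻¹ • X) :=
    (Commute.one_left _).add_left ((Commute.one_right X).sub_right ((Commute.refl X).smul_right _))
  rw [mul_ringInverse_mul_adj hone (FormAdjoint.map_mul hsep hadj) hα hcomm hXinv
    (adj_one_add hone hadd hX hα) (adj_one_sub_inv_smul hone hadd hsmul hατ hX hα), sq]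

theorem similitude_cayley_map_lands_in_GU
    {E V : Type*} [Field E] [AddCommGroup V] [Module E V]
    [FiniteDimensional E V] [Nontrivial V]
    (hchar : (2 : E) ≠ 0)
    (τ : E →+* E) (hτ : ∀ a : E, τ (τ a) = a)
    (ε : E) (hε : ε = 1 ∨ ε = -1)
    (B : V → V → E)
    (haddl : ∀ u v w : V, B (u + v) w = B u w + B v w)
    (hsmull : ∀ (c : E) (v w : V), B (c • v) w = c * B v w)
    (hherm : ∀ v w : V, B v w = ε * τ (B w v))
    (hnd : ∀ v : V, (∀ w : V, B v w = 0) → v = 0)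
    (adj : (V →ₗ[E] V) → (V →ₗ[E] V))
    (hadj : ∀ (a : V →ₗ[E] V) (v w : V), B (a v) w = B v (adj a w))
    (X : V →ₗ[E] V) (α : E) (hατ : τ α = α)
    (hX : X + adj X = α • (1 : V →ₗ[E] V))
    (hα : (1 : E) + α ≠ 0)
    (hXinv : IsUnit ((1 : V →ₗ[E] V) + X)) :
    ((1 - ((1 + α)⁻¹ : E) • X) * Ring.inverse (1 + X)) *
      adj ((1 - ((1 + α)⁻¹ : E) • X) * Ring.inverse (1 + X)) =
      (((1 + α)⁻¹ : E) ^ 2) • (1 : V →ₗ[E] V) :=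
  similitude_cayley_map_lands_in_GU_general τ hτ ε hε B haddl hsmull hherm hnd adj hadj X α hατ hX
    hα hXinv
end

section
/- Let g ∈ GU(V) with multiplier μ = λ² for a scalar λ ∈ F^×, and suppose λ + g is invertible. Set X_λ = (1 − g)(λ + g)^{-1}. Then X_λ + X_λ* = λ^{-1} − 1; moreover 1 + X_λ is invertible if and only if λ ≠ −1, and in that case c(X_λ) = g, where c is the similitude Cayley map. -/
/-!
Write `s = l + g` and `X = (1 - g) s⁻¹`. As `s` commutes with `g`, both `s X` and `X s` equal
`1 - g`. Hence `s (1 + X) = l + 1`, which gives the invertibility criterion, and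
`1 - l X = g (1 + X)`, which gives `c(X) = g`. Applying the adjoint to `X s = 1 - g` gives
`(l + g*) X* = 1 - g*`; multiplying on the left by `g` and using `g g* = l²` turns this into
`l s X* = g - l²`, so `s (X + X*) = (l⁻¹ - 1) s`.
-/

open scoped Ring

section CayleyAlgebra

variable {E A : Type*} [Field E] [Ring A] [Algebra E A]

-- `invCayley l g` is the paper's `X_λ`; `similitudeCayley X α` is `c(X)` with `α = α(X)` passed
-- explicitly.
noncomputable def invCayley (l : E) (g : A) : A := (1 - g) * (l • 1 + g)⁻¹ʳ

noncomputable def similitudeCayley (X : A) (α : E) : A := (1 - (1 + α)⁻¹ • X) * (1 + X)⁻¹ʳ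

variable {l : E} {g : A}

theorem commute_smul_one_add_self (l : E) (g : A) : Commute (l • 1 + g) g :=
  ((Commute.one_left g).smul_left l).add_left (Commute.refl g)

theorem invCayley_mul_smul_one_add (hs : IsUnit (l • 1 + g)) :
    invCayley l g * (l • 1 + g) = 1 - g :=
  Ring.inverse_mul_cancel_right _ _ hs

theorem smul_one_add_mul_invCayley (hs : IsUnit (l • 1 + g)) :
    (l • 1 + g) * invCayley l g = 1 - g := by
  rw [invCayley, ← mul_assoc, ((Commute.one_right _).sub_right (commute_smul_one_add_self l g)).eq,
    Ring.mul_inverse_cancel_right _ _ hs]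

theorem smul_one_add_mul_one_add_invCayley (hs : IsUnit (l • 1 + g)) :
    (l • 1 + g) * (1 + invCayley l g) = (l + 1) • 1 := by
  rw [mul_add, mul_one, smul_one_add_mul_invCayley hs]
  module

theorem isUnit_one_add_invCayley_iff_isUnit_algebraMap (hs : IsUnit (l • 1 + g)) :
    IsUnit (1 + invCayley l g) ↔ IsUnit (algebraMap E A (l + 1)) := by
  rw [← Units.isUnit_units_mul hs.unit, IsUnit.unit_spec, smul_one_add_mul_one_add_invCayley hs,
    Algebra.algebraMap_eq_smul_one]

theorem isUnit_one_add_invCayley (hs : IsUnit (l • 1 + g)) (hl : l ≠ -1) :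
    IsUnit (1 + invCayley l g) :=
  (isUnit_one_add_invCayley_iff_isUnit_algebraMap hs).mpr
    ((Ne.isUnit (add_eq_zero_iff_eq_neg.not.mpr hl)).map _)

theorem isUnit_one_add_invCayley_iff [Nontrivial A] (hs : IsUnit (l • 1 + g)) :
    IsUnit (1 + invCayley l g) ↔ l ≠ -1 := by
  rw [isUnit_one_add_invCayley_iff_isUnit_algebraMap hs, isUnit_map_iff, isUnit_iff_ne_zero, ne_eq,
    add_eq_zero_iff_eq_neg]

theorem one_sub_smul_invCayley (hs : IsUnit (l • 1 + g)) :
    1 - l • invCayley l g = g * (1 + invCayley l g) := by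
  have h := smul_one_add_mul_invCayley hs
  rw [add_mul, smul_mul_assoc, one_mul] at h
  rw [eq_sub_of_add_eq h]
  noncomm_ring

theorem similitudeCayley_invCayley (hs : IsUnit (l • 1 + g)) (hl : l ≠ -1) :
    similitudeCayley (invCayley l g) (l⁻¹ - 1) = g := by
  rw [similitudeCayley, add_sub_cancel, inv_inv, one_sub_smul_invCayley hs,
    Ring.mul_inverse_cancel_right _ _ (isUnit_one_add_invCayley hs hl)]

theorem invCayley_add_unop_map (φ : A →+* Aᵐᵒᵖ) (hl : l ≠ 0)
    (hφl : (φ (l • 1)).unop = l • 1) (hμ : g * (φ g).unop = l ^ 2 • 1)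
    (hs : IsUnit (l • 1 + g)) :
    invCayley l g + (φ (invCayley l g)).unop = (l⁻¹ - 1) • 1 := by
  set X := invCayley l g
  set Y := (φ X).unop
  have hY : (l • 1 + (φ g).unop) * Y = 1 - (φ g).unop := by
    simpa [hφl] using congrArg (fun a => (φ a).unop) (invCayley_mul_smul_one_add hs)
  have hsY : (l • 1 + g) * Y = l⁻¹ • g - l • 1 := by
    have h := congrArg (g * ·) hY
    simp only [← mul_assoc, mul_add, mul_sub, hμ, mul_smul_comm, mul_one] at h
    rw [show l • g + l ^ 2 • 1 = l • (l • 1 + g) by module, smul_mul_assoc] at h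
    refine smul_right_injective A hl ?_
    dsimp only
    rw [h, smul_sub, smul_smul, mul_inv_cancel₀ hl, one_smul, smul_smul, ← sq]
  refine hs.mul_left_cancel ?_
  rw [mul_add, smul_one_add_mul_invCayley hs, hsY, mul_smul_comm, mul_one, sub_smul, one_smul,
    smul_add, smul_smul, inv_mul_cancel₀ hl]
  module

end CayleyAlgebra

section Form

variable {E V : Type*} [Field E] [AddCommGroup V] [Module E V]

structure IsNondegEpsHermitian (τ : E →+* E) (ε : E) (B : V → V → E) : Prop where
  add_left : ∀ u v w : V, B (u + v) w = B u w + B v w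
  smul_left : ∀ (c : E) (v w : V), B (c • v) w = c * B v w
  eps_hermitian : ∀ v w : V, B v w = ε * τ (B w v)
  nondegenerate : ∀ v : V, (∀ w : V, B v w = 0) → v = 0

def IsFormAdjoint (B : V → V → E) (adj : Module.End E V → Module.End E V) : Prop :=
  ∀ (a : Module.End E V) (v w : V), B (a v) w = B v (adj a w)

namespace IsNondegEpsHermitian

variable {τ : E →+* E} {ε : E} {B : V → V → E} {adj : Module.End E V → Module.End E V}

theorem add_right (hB : IsNondegEpsHermitian τ ε B) (u v w : V) :
    B u (v + w) = B u v + B u w := by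
  rw [hB.eps_hermitian u, hB.add_left, map_add, mul_add, ← hB.eps_hermitian, ← hB.eps_hermitian]

theorem smul_right_of_fixed (hB : IsNondegEpsHermitian τ ε B) {c : E} (hc : τ c = c) (u v : V) :
    B u (c • v) = c * B u v := by
  rw [hB.eps_hermitian u, hB.smul_left, map_mul, hc, mul_left_comm, ← hB.eps_hermitian]

theorem eq_of_forall_right (hB : IsNondegEpsHermitian τ ε B) {w w' : V}
    (h : ∀ v, B v w = B v w') : w = w' := by
  rw [← sub_eq_zero]
  refine hB.nondegenerate _ fun v => ?_
  have hsplit := hB.add_right v (w - w') w'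
  rw [sub_add_cancel, h] at hsplit
  rw [hB.eps_hermitian, right_eq_add.mp hsplit, map_zero, mul_zero]

theorem adjoint_eq (hB : IsNondegEpsHermitian τ ε B)
    (hadj : IsFormAdjoint B adj) {a b : Module.End E V}
    (h : ∀ v w, B (a v) w = B v (b w)) : adj a = b :=
  LinearMap.ext fun w => hB.eq_of_forall_right fun v => by rw [← hadj, h]

theorem adjoint_one (hB : IsNondegEpsHermitian τ ε B)
    (hadj : IsFormAdjoint B adj) : adj 1 = 1 :=
  hB.adjoint_eq hadj fun _ _ => rfl

theorem adjoint_add (hB : IsNondegEpsHermitian τ ε B)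
    (hadj : IsFormAdjoint B adj) (a b : Module.End E V) :
    adj (a + b) = adj a + adj b :=
  hB.adjoint_eq hadj fun v w => by
    rw [LinearMap.add_apply, hB.add_left, hadj, hadj, LinearMap.add_apply, hB.add_right]

theorem adjoint_mul (hB : IsNondegEpsHermitian τ ε B)
    (hadj : IsFormAdjoint B adj) (a b : Module.End E V) :
    adj (a * b) = adj b * adj a :=
  hB.adjoint_eq hadj fun v w => by rw [Module.End.mul_apply, hadj, hadj, Module.End.mul_apply]

theorem adjoint_smul_one_of_fixed (hB : IsNondegEpsHermitian τ ε B)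
    (hadj : IsFormAdjoint B adj) {c : E} (hc : τ c = c) :
    adj (c • 1) = c • 1 :=
  hB.adjoint_eq hadj fun v w => by rw [LinearMap.smul_apply, Module.End.one_apply, hB.smul_left,
    LinearMap.smul_apply, Module.End.one_apply, hB.smul_right_of_fixed hc]

def adjointOpHom (hB : IsNondegEpsHermitian τ ε B)
    (hadj : IsFormAdjoint B adj) :
    Module.End E V →+* (Module.End E V)ᵐᵒᵖ where
  toFun a := MulOpposite.op (adj a)
  map_one' := by rw [hB.adjoint_one hadj, MulOpposite.op_one]
  map_mul' a b := by rw [hB.adjoint_mul hadj, MulOpposite.op_mul]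
  map_zero' := by
    have h := hB.adjoint_add hadj 0 0
    rw [add_zero, left_eq_add] at h
    rw [h, MulOpposite.op_zero]
  map_add' a b := by rw [hB.adjoint_add hadj, MulOpposite.op_add]

end IsNondegEpsHermitian

end Form

theorem cayley_fibers_general
    {E V : Type*} [Field E] [AddCommGroup V] [Module E V]
    [Nontrivial V]
    (τ : E →+* E)
    (ε : E)
    (B : V → V → E)
    (haddl : ∀ u v w : V, B (u + v) w = B u w + B v w)
    (hsmull : ∀ (c : E) (v w : V), B (c • v) w = c * B v w)
    (hherm : ∀ v w : V, B v w = ε * τ (B w v))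
    (hnd : ∀ v : V, (∀ w : V, B v w = 0) → v = 0)
    (adj : (V →ₗ[E] V) → (V →ₗ[E] V))
    (hadj : ∀ (a : V →ₗ[E] V) (v w : V), B (a v) w = B v (adj a w))
    (g : V →ₗ[E] V)
    (l : E) (hl0 : l ≠ 0) (hlτ : τ l = l)
    (hμ : g * adj g = (l ^ 2) • (1 : V →ₗ[E] V))
    (hinv : IsUnit (l • (1 : V →ₗ[E] V) + g)) :
    (((1 - g) * Ring.inverse (l • (1 : V →ₗ[E] V) + g)) +
        adj ((1 - g) * Ring.inverse (l • (1 : V →ₗ[E] V) + g)) =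
        (l⁻¹ - 1) • (1 : V →ₗ[E] V)) ∧
    (IsUnit (1 + (1 - g) * Ring.inverse (l • (1 : V →ₗ[E] V) + g)) ↔ l ≠ -1) ∧
    (l ≠ -1 →
      (1 - ((1 + (l⁻¹ - 1))⁻¹ : E) • ((1 - g) * Ring.inverse (l • (1 : V →ₗ[E] V) + g))) *
        Ring.inverse (1 + (1 - g) * Ring.inverse (l • (1 : V →ₗ[E] V) + g)) = g) := by
  have hB : IsNondegEpsHermitian τ ε B := ⟨haddl, hsmull, hherm, hnd⟩
  exact ⟨invCayley_add_unop_map (hB.adjointOpHom hadj) hl0 (hB.adjoint_smul_one_of_fixed hadj hlτ)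
    hμ hinv, isUnit_one_add_invCayley_iff hinv, similitudeCayley_invCayley hinv⟩

theorem cayley_fibers
    {E V : Type*} [Field E] [AddCommGroup V] [Module E V]
    [FiniteDimensional E V] [Nontrivial V]
    (hchar : (2 : E) ≠ 0)
    (τ : E →+* E) (hτ : ∀ a : E, τ (τ a) = a)
    (ε : E) (hε : ε = 1 ∨ ε = -1)
    (B : V → V → E)
    (haddl : ∀ u v w : V, B (u + v) w = B u w + B v w)
    (hsmull : ∀ (c : E) (v w : V), B (c • v) w = c * B v w)
    (hherm : ∀ v w : V, B v w = ε * τ (B w v))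
    (hnd : ∀ v : V, (∀ w : V, B v w = 0) → v = 0)
    (adj : (V →ₗ[E] V) → (V →ₗ[E] V))
    (hadj : ∀ (a : V →ₗ[E] V) (v w : V), B (a v) w = B v (adj a w))
    (g : V →ₗ[E] V) (hgu : IsUnit g)
    (l : E) (hl0 : l ≠ 0) (hlτ : τ l = l)
    (hμ : g * adj g = (l ^ 2) • (1 : V →ₗ[E] V))
    (hinv : IsUnit (l • (1 : V →ₗ[E] V) + g)) :
    (((1 - g) * Ring.inverse (l • (1 : V →ₗ[E] V) + g)) +
        adj ((1 - g) * Ring.inverse (l • (1 : V →ₗ[E] V) + g)) =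
        (l⁻¹ - 1) • (1 : V →ₗ[E] V)) ∧
    (IsUnit (1 + (1 - g) * Ring.inverse (l • (1 : V →ₗ[E] V) + g)) ↔ l ≠ -1) ∧
    (l ≠ -1 →
      (1 - ((1 + (l⁻¹ - 1))⁻¹ : E) • ((1 - g) * Ring.inverse (l • (1 : V →ₗ[E] V) + g))) *
        Ring.inverse (1 + (1 - g) * Ring.inverse (l • (1 : V →ₗ[E] V) + g)) = g) :=
  cayley_fibers_general τ ε B haddl hsmull hherm hnd adj hadj g l hl0 hlτ hμ hinv
end

section
/- For X in gu(V)^1 with 1 + α(X) ≠ 0 and α(X) ≠ −2 (equivalently λ = (1+α)^{-1} ≠ −1), the element λ + c(X) equals (λ+1)(1+X)^{-1} and is invertible. Consequently, c(X) = 1 if and only if X = 0 or α(X) = −2. -/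
/- STATEMENT 7: For X ∈ gu(V)^1 (so X + X* = α, 1 + α ≠ 0, 1 + X invertible)
with α ≠ −2 (equivalently λ = (1+α)⁻¹ ≠ −1), one has
λ + c(X) = (λ+1)(1+X)⁻¹, which is invertible. Consequently
c(X) = 1 iff X = 0 or α(X) = −2. -/
theorem cayley_shift_invertible_and_kernel
    {E V : Type*} [Field E] [AddCommGroup V] [Module E V]
    [FiniteDimensional E V] [Nontrivial V]
    (hchar : (2 : E) ≠ 0)
    (τ : E →+* E) (hτ : ∀ a : E, τ (τ a) = a)
    (ε : E) (hε : ε = 1 ∨ ε = -1)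
    (B : V → V → E)
    (haddl : ∀ u v w : V, B (u + v) w = B u w + B v w)
    (hsmull : ∀ (c : E) (v w : V), B (c • v) w = c * B v w)
    (hherm : ∀ v w : V, B v w = ε * τ (B w v))
    (hnd : ∀ v : V, (∀ w : V, B v w = 0) → v = 0)
    (adj : (V →ₗ[E] V) → (V →ₗ[E] V))
    (hadj : ∀ (a : V →ₗ[E] V) (v w : V), B (a v) w = B v (adj a w))
    (X : V →ₗ[E] V) (α : E) (hατ : τ α = α)
    (hX : X + adj X = α • (1 : V →ₗ[E] V))
    (hα : (1 : E) + α ≠ 0)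
    (hXinv : IsUnit ((1 : V →ₗ[E] V) + X)) :
    (α ≠ -2 →
      (((1 + α)⁻¹ : E) • (1 : V →ₗ[E] V) +
          (1 - ((1 + α)⁻¹ : E) • X) * Ring.inverse (1 + X) =
        (((1 + α)⁻¹ + 1 : E)) • Ring.inverse (1 + X)) ∧
      IsUnit (((1 + α)⁻¹ : E) • (1 : V →ₗ[E] V) +
          (1 - ((1 + α)⁻¹ : E) • X) * Ring.inverse (1 + X))) ∧
    ((1 - ((1 + α)⁻¹ : E) • X) * Ring.inverse (1 + X) = 1 ↔ X = 0 ∨ α = -2) := by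

  set lam : E := (1 + α)⁻¹ with hlam
  have hmain : (lam : E) • (1 : V →ₗ[E] V) +
      (1 - (lam : E) • X) * Ring.inverse (1 + X) =
      ((lam + 1 : E)) • Ring.inverse (1 + X) := by
    have h1 : (lam : E) • (1 : V →ₗ[E] V) =
        ((lam : E) • (1 + X)) * Ring.inverse (1 + X) := by
      rw [smul_mul_assoc, Ring.mul_inverse_cancel _ hXinv]
    rw [h1, ← add_mul,
      show (lam : E) • ((1 : V →ₗ[E] V) + X) + (1 - lam • X) = (lam + 1 : E) • 1 from by
        module,
      smul_mul_assoc, one_mul]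
  have hlamneg : α = -2 → lam = -1 := by
    intro h; rw [hlam, h]; norm_num
  have hlamneg' : lam = -1 → α = -2 := by
    intro h
    have h2 := inv_mul_cancel₀ hα
    rw [← hlam, h] at h2
    linear_combination -h2
  constructor
  · intro hα2
    refine ⟨hmain, ?_⟩
    rw [hmain]
    have hne : (lam + 1 : E) ≠ 0 := fun h =>
      hα2 (hlamneg' (by linear_combination h))
    refine ⟨⟨(lam + 1 : E) • Ring.inverse (1 + X),
      ((lam + 1 : E)⁻¹) • ((1 : V →ₗ[E] V) + X), ?_, ?_⟩, rfl⟩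
    · rw [smul_mul_assoc, mul_smul_comm, smul_smul, mul_inv_cancel₀ hne, one_smul,
        Ring.inverse_mul_cancel _ hXinv]
    · rw [smul_mul_assoc, mul_smul_comm, smul_smul, inv_mul_cancel₀ hne, one_smul,
        Ring.mul_inverse_cancel _ hXinv]
  · constructor
    · intro h
      have h2 : (1 : V →ₗ[E] V) - (lam : E) • X = 1 + X := by
        have h5 := congrArg (· * (1 + X)) h
        simp only [mul_assoc, Ring.inverse_mul_cancel _ hXinv, mul_one, one_mul] at h5
        exact h5
      have h3 : ((lam + 1 : E)) • X = 0 := by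
        have h6 : (1 : V →ₗ[E] V) - lam • X - (1 + X) = 0 := by rw [h2]; exact sub_self _
        have h4 : -(((lam + 1 : E)) • X) = 0 := by rw [← h6]; module
        simpa using h4
      by_cases hc : (lam + 1 : E) = 0
      · exact Or.inr (hlamneg' (by linear_combination hc))
      · exact Or.inl ((smul_eq_zero.mp h3).resolve_left hc)
    · rintro (rfl | h)
      · simp [Ring.inverse_one]
      · rw [hlamneg h, show (1 : V →ₗ[E] V) - (-1 : E) • X = 1 + X from by module,
          Ring.mul_inverse_cancel _ hXinv]
end

section
/- Let L be an o_E-lattice in V, 𝓛̂ = {a ∈ End_E(V) : a(L) ⊆ L}, and k ≥ 1. If g ∈ (1 + ϖ^k 𝓛̂) ∩ GU(V), then the multiplier μ(g) lies in 1 + p_F^k. -/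
/-! Write `π = ϖ ^ k` and `g = 1 + π X` with `X L ⊆ L`. The values `w (B x y)` on `L × L`
are bounded by the largest value `M = w (B a b)` attained on a pair of generators of `L`, and
`M ≠ 0` because `B` is non-degenerate and `L` spans `V`. Expanding `B (g a) (g b) = μ B a b`
gives `(μ - 1) B a b = π (B (X a) b + B a (X b) + π B (X a) (X b))`, whose right-hand side has
valuation at most `w π * M`; cancelling `M` yields `w (μ - 1) ≤ w π`, which descends to `F`
because `v` and the restriction of `w` are equivalent valuations. -/

section Hermitian

variable {E V : Type*} [Field E] [AddCommGroup V] {τ : E →+* E} {ε : E} {B : V → V → E}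

theorem map_add_right_of_hermitian (haddl : ∀ u u' u'' : V, B (u + u') u'' = B u u'' + B u' u'')
    (hherm : ∀ u u' : V, B u u' = ε * τ (B u' u)) (u u' u'' : V) :
    B u (u' + u'') = B u u' + B u u'' := by
  rw [hherm u, haddl, map_add, mul_add, ← hherm u, ← hherm u]

theorem map_smul_right_of_hermitian [Module E V] (hsmull : ∀ (c : E) (u u' : V), B (c • u) u' = c * B u u')
    (hherm : ∀ u u' : V, B u u' = ε * τ (B u' u)) (c : E) (u u' : V) :
    B u (c • u') = τ c * B u u' := by
  rw [hherm u, hsmull, map_mul, hherm u u']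
  ring

def sesqFormOfHermitian [Module E V] (haddl : ∀ u u' u'' : V, B (u + u') u'' = B u u'' + B u' u'')
    (hsmull : ∀ (c : E) (u u' : V), B (c • u) u' = c * B u u')
    (hherm : ∀ u u' : V, B u u' = ε * τ (B u' u)) : V →ₗ[E] V →ₛₗ[τ] E :=
  LinearMap.mk₂'ₛₗ (RingHom.id E) τ B haddl hsmull (map_add_right_of_hermitian haddl hherm)
    (map_smul_right_of_hermitian hsmull hherm)

@[simp]
theorem sesqFormOfHermitian_apply [Module E V] (haddl : ∀ u u' u'' : V, B (u + u') u'' = B u u'' + B u' u'')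
    (hsmull : ∀ (c : E) (u u' : V), B (c • u) u' = c * B u u')
    (hherm : ∀ u u' : V, B u u' = ε * τ (B u' u)) (u u' : V) :
    sesqFormOfHermitian haddl hsmull hherm u u' = B u u' :=
  rfl

end Hermitian

namespace LinearMap

variable {E V Γ : Type*} [Field E] [AddCommGroup V] [Module E V]
  [LinearOrderedCommGroupWithZero Γ] {τ : E →+* E} (B : V →ₗ[E] V →ₛₗ[τ] E)

theorem exists_mem_apply_ne_zero_of_span_eq_top (hB : B ≠ 0) {L : Set V}
    (hL : Submodule.span E L = ⊤) : ∃ x ∈ L, ∃ y ∈ L, B x y ≠ 0 := by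
  by_contra! h
  refine hB (ext_on hL fun x hx => ext_on hL fun y hy => ?_)
  exact h x hx y hy

theorem valuation_apply_sum_smul_le (w : Valuation E Γ) (hτw : ∀ a, w (τ a) = w a)
    {s : Finset V} {M : Γ} (hM : ∀ i ∈ s, ∀ j ∈ s, w (B i j) ≤ M) {c d : V → E}
    (hc : ∀ i ∈ s, w (c i) ≤ 1) (hd : ∀ j ∈ s, w (d j) ≤ 1) :
    w (B (∑ i ∈ s, c i • i) (∑ j ∈ s, d j • j)) ≤ M := by
  simp only [map_sum, map_smulₛₗ, sum_apply, smul_apply, RingHom.id_apply,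
    smul_eq_mul]
  refine w.map_sum_le fun j hj => ?_
  rw [map_mul, hτw]
  refine mul_le_of_le_one_of_le (hd j hj) (w.map_sum_le fun i hi => ?_)
  rw [map_mul]
  exact mul_le_of_le_one_of_le (hc i hi) (hM i hi j hj)

theorem exists_max_valuation_apply (w : Valuation E Γ) (hτw : ∀ a, w (τ a) = w a)
    {L : Set V} {s : Finset V} (hsL : ∀ x ∈ s, x ∈ L)
    (hLfg : ∀ x ∈ L, ∃ c : V → E, (∀ i ∈ s, w (c i) ≤ 1) ∧ x = ∑ i ∈ s, c i • i)
    (hne : ∃ x ∈ L, ∃ y ∈ L, B x y ≠ 0) :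
    ∃ a ∈ L, ∃ b ∈ L, w (B a b) ≠ 0 ∧ ∀ x ∈ L, ∀ y ∈ L, w (B x y) ≤ w (B a b) := by
  obtain ⟨x₀, hx₀, y₀, hy₀, hxy₀⟩ := hne
  have hs : s.Nonempty := by
    obtain ⟨c, -, rfl⟩ := hLfg x₀ hx₀
    contrapose! hxy₀
    simp [hxy₀]
  obtain ⟨⟨a, b⟩, hab, hmax⟩ := (s ×ˢ s).exists_max_image (fun p => w (B p.1 p.2)) (hs.product hs)
  obtain ⟨ha, hb⟩ := Finset.mem_product.mp hab
  have hbound : ∀ x ∈ L, ∀ y ∈ L, w (B x y) ≤ w (B a b) := by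
    intro x hx y hy
    obtain ⟨c, hc, rfl⟩ := hLfg x hx
    obtain ⟨d, hd, rfl⟩ := hLfg y hy
    exact B.valuation_apply_sum_smul_le w hτw
      (fun i hi j hj => hmax (i, j) (Finset.mem_product.mpr ⟨hi, hj⟩)) hc hd
  refine ⟨a, hsL a ha, b, hsL b hb, fun h0 => hxy₀ ?_, hbound⟩
  simpa [h0] using hbound x₀ hx₀ y₀ hy₀

theorem apply_one_add_smul_apply_one_add_smul {π : E} (hπ : τ π = π) (X : V →ₗ[E] V) (x y : V) :
    B ((1 + π • X) x) ((1 + π • X) y) =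
      B x y + π * (B (X x) y + B x (X y) + π * B (X x) (X y)) := by
  simp only [add_apply, Module.End.one_apply, smul_apply, map_add, map_smulₛₗ, RingHom.id_apply,
    smul_eq_mul, hπ]
  ring

theorem valuation_sub_one_mul_le (w : Valuation E Γ) {L : Set V} {M : Γ}
    (hM : ∀ x ∈ L, ∀ y ∈ L, w (B x y) ≤ M) {π : E} (hπτ : τ π = π) (hπ : w π ≤ 1)
    {X : V →ₗ[E] V} (hX : ∀ x ∈ L, X x ∈ L) {m : E} {x y : V} (hx : x ∈ L) (hy : y ∈ L)
    (hm : B ((1 + π • X) x) ((1 + π • X) y) = m * B x y) :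
    w (m - 1) * w (B x y) ≤ w π * M := by
  have hexp : (m - 1) * B x y = π * (B (X x) y + B x (X y) + π * B (X x) (X y)) := by
    rw [B.apply_one_add_smul_apply_one_add_smul hπτ] at hm
    linear_combination -hm
  rw [← map_mul, hexp, map_mul]
  refine mul_le_mul_right (w.map_add_le (w.map_add_le ?_ ?_) ?_) _
  · exact hM _ (hX x hx) _ hy
  · exact hM _ hx _ (hX y hy)
  · rw [map_mul]
    exact mul_le_of_le_one_of_le hπ (hM _ (hX x hx) _ (hX y hy))

end LinearMap

theorem multiplier_congruence_general
    {F E V Γ₀ Γ₁ : Type*} [Field F] [Field E] [Algebra F E]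
    [AddCommGroup V] [Module E V] [Nontrivial V]
    [LinearOrderedCommGroupWithZero Γ₀] [LinearOrderedCommGroupWithZero Γ₁]
    (v : Valuation F Γ₀) (w : Valuation E Γ₁)
    (hcompat : ∀ x : F, w (algebraMap F E x) ≤ 1 ↔ v x ≤ 1)
    (ϖ : F) (hϖ1 : v ϖ < 1)
    (τ : E →+* E) (hτw : ∀ a : E, w (τ a) = w a)
    (hτF : ∀ x : F, τ (algebraMap F E x) = algebraMap F E x)
    (ε : E)
    (B : V → V → E)
    (haddl : ∀ u u' u'' : V, B (u + u') u'' = B u u'' + B u' u'')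
    (hsmull : ∀ (c : E) (u u' : V), B (c • u) u' = c * B u u')
    (hherm : ∀ u u' : V, B u u' = ε * τ (B u' u))
    (hnd : ∀ u : V, (∀ u' : V, B u u' = 0) → u = 0)
    (L : AddSubgroup V)
    (hLspan : Submodule.span E (L : Set V) = ⊤)
    (s : Finset V) (hsL : ∀ x ∈ s, x ∈ L)
    (hLfg : ∀ x ∈ L, ∃ c : V → E, (∀ i ∈ s, w (c i) ≤ 1) ∧ x = ∑ i ∈ s, c i • i)
    (k : ℕ)
    (g : V →ₗ[E] V)
    (hg : ∃ X : V →ₗ[E] V, (∀ x ∈ L, X x ∈ L) ∧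
        g = 1 + (algebraMap F E (ϖ ^ k)) • X)
    (μ : F)
    (hgGU : ∀ u u' : V, B (g u) (g u') = algebraMap F E μ * B u u') :
    v (μ - 1) ≤ (v ϖ) ^ k := by
  obtain ⟨X, hXL, rfl⟩ := hg
  set B' := sesqFormOfHermitian haddl hsmull hherm
  have hB' : B' ≠ 0 := fun h0 => by
    obtain ⟨u, hu⟩ := exists_ne (0 : V)
    exact hu (hnd u fun u' => by simpa [B'] using congr($h0 u u'))
  obtain ⟨a, ha, b, hb, hab, hmax⟩ := B'.exists_max_valuation_apply w hτw hsL hLfg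
    (B'.exists_mem_apply_ne_zero_of_span_eq_top hB' hLspan)
  have hπ : w (algebraMap F E (ϖ ^ k)) ≤ 1 := (hcompat _).2 (map_pow v ϖ k ▸ pow_le_one' hϖ1.le k)
  have hle : w (algebraMap F E (μ - 1)) ≤ w (algebraMap F E (ϖ ^ k)) := by
    rw [map_sub, map_one]
    exact le_of_mul_le_mul_right (B'.valuation_sub_one_mul_le w hmax (hτF _) hπ hXL ha hb
      (hgGU a b)) (zero_lt_iff.mpr hab)
  have hequiv : (w.comap (algebraMap F E)).IsEquiv v := Valuation.isEquiv_of_val_le_one hcompat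
  rw [← map_pow]
  exact hequiv.le_iff_le.mp hle

theorem multiplier_congruence
    {F E V Γ₀ Γ₁ : Type*} [Field F] [Field E] [Algebra F E]
    [AddCommGroup V] [Module E V] [FiniteDimensional E V] [Nontrivial V]
    [LinearOrderedCommGroupWithZero Γ₀] [LinearOrderedCommGroupWithZero Γ₁]
    (hFE : Module.finrank F E ≤ 2)
    (v : Valuation F Γ₀) (w : Valuation E Γ₁)
    (hcompat : ∀ x : F, w (algebraMap F E x) ≤ 1 ↔ v x ≤ 1)
    (ϖ : F) (hϖ0 : ϖ ≠ 0) (hϖ1 : v ϖ < 1) (hϖ2 : ∀ x : F, v x < 1 → v x ≤ v ϖ)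
    (τ : E →+* E) (hτ : ∀ a : E, τ (τ a) = a) (hτw : ∀ a : E, w (τ a) = w a)
    (hτF : ∀ x : F, τ (algebraMap F E x) = algebraMap F E x)
    (ε : E) (hε : ε = 1 ∨ ε = -1)
    (B : V → V → E)
    (haddl : ∀ u u' u'' : V, B (u + u') u'' = B u u'' + B u' u'')
    (hsmull : ∀ (c : E) (u u' : V), B (c • u) u' = c * B u u')
    (hherm : ∀ u u' : V, B u u' = ε * τ (B u' u))
    (hnd : ∀ u : V, (∀ u' : V, B u u' = 0) → u = 0)
    (L : AddSubgroup V)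
    (hLsmul : ∀ c : E, w c ≤ 1 → ∀ x ∈ L, c • x ∈ L)
    (hLspan : Submodule.span E (L : Set V) = ⊤)
    (s : Finset V) (hsL : ∀ x ∈ s, x ∈ L)
    (hLfg : ∀ x ∈ L, ∃ c : V → E, (∀ i ∈ s, w (c i) ≤ 1) ∧ x = ∑ i ∈ s, c i • i)
    (k : ℕ) (hk : 1 ≤ k)
    (g : V →ₗ[E] V)
    (hg : ∃ X : V →ₗ[E] V, (∀ x ∈ L, X x ∈ L) ∧
        g = 1 + (algebraMap F E (ϖ ^ k)) • X)
    (μ : F)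
    (hgGU : ∀ u u' : V, B (g u) (g u') = algebraMap F E μ * B u u') :
    v (μ - 1) ≤ (v ϖ) ^ k :=
  multiplier_congruence_general v w hcompat ϖ hϖ1 τ hτw hτF ε B haddl hsmull hherm hnd L hLspan s
    hsL hLfg k g hg μ hgGU
end

section
/- With residual characteristic of F odd, for each k ≥ 1 the classical Cayley map X ↦ (1−X)(1+X)^{-1} restricts to a bijection from ϖ^k 𝓛̈ onto (1 + ϖ^k 𝓛̂) ∩ U(V), where 𝓛̈ = 𝓛̂ ∩ u(V). -/
/-! The Cayley map `C X = (1 - X) (1 + X)⁻¹` is an involution of `{X | 1 + X invertible}` once `2`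
is invertible, and writing `u = (1 + X) a`, `u' = (1 + X) b` one has
`B (C X u) (C X u') - B u u' = -2 (B (X a) b + B a (X b))`, so `C` exchanges skew operators and
isometries. For the lattice conditions: if `A` preserves `L` and `w c < 1`, then
`L ⊆ (1 + c A) L + c L`, so by Nakayama's lemma over the valuation ring `1 + c A` maps `L` onto `L`;
as `L` spans `V`, it is invertible with inverse preserving `L`. Then
`C (c Y) = 1 + c (-2 Y (1 + c Y)⁻¹)` and, `2` being a unit of `o_E`,
`C (1 + c Z) = c (-½ Z (1 + c (½ Z))⁻¹)`. -/

open scoped Ring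

section Cayley

variable {R : Type*} [Ring R]

noncomputable def cayley (X : R) : R := (1 - X) * (1 + X)⁻¹ʳ

lemma one_add_cayley {X : R} (hX : IsUnit (1 + X)) : 1 + cayley X = 2 * (1 + X)⁻¹ʳ := by
  conv_lhs => rw [← Ring.mul_inverse_cancel _ hX]
  rw [cayley, ← add_mul]
  congr 1
  rw [add_add_sub_cancel, one_add_one_eq_two]

lemma one_sub_cayley {X : R} (hX : IsUnit (1 + X)) : 1 - cayley X = 2 * X * (1 + X)⁻¹ʳ := by
  conv_lhs => rw [← Ring.mul_inverse_cancel _ hX]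
  rw [cayley, ← sub_mul]
  congr 1
  noncomm_ring

lemma isUnit_one_add_cayley {X : R} (h2 : IsUnit (2 : R)) (hX : IsUnit (1 + X)) :
    IsUnit (1 + cayley X) := by
  rw [one_add_cayley hX]
  exact h2.mul hX.ringInverse

lemma cayley_cayley {X : R} (h2 : IsUnit (2 : R)) (hX : IsUnit (1 + X)) :
    cayley (cayley X) = X := by
  rw [cayley, one_sub_cayley hX, one_add_cayley hX,
    Ring.mul_inverse_rev' (Commute.ofNat_left 2 _), Ring.inverse_inverse hX, mul_assoc,
    Ring.inverse_mul_cancel_left _ _ hX, (Commute.ofNat_left 2 X).eq, mul_assoc,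
    Ring.mul_inverse_cancel _ h2, mul_one]

end Cayley

lemma isometry_cayley_iff {S V K : Type*} [Ring S] [AddCommGroup V] [Module S V] [Ring K]
    [NoZeroDivisors K] (h2 : (2 : K) ≠ 0) (B : V →+ V →+ K) {X : Module.End S V}
    (hX : IsUnit (1 + X)) :
    (∀ u u', B (cayley X u) (cayley X u') = B u u') ↔ ∀ u u', B (X u) u' + B u (X u') = 0 := by
  have hcayley : ∀ a, cayley X ((1 + X) a) = a - X a := fun a => by
    rw [← Module.End.mul_apply, cayley, Ring.inverse_mul_cancel_right _ _ hX]
    rfl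
  have key : ∀ a b, B (a - X a) (b - X b) - B ((1 + X) a) ((1 + X) b) =
      -(2 * (B (X a) b + B a (X b))) := fun a b => by
    simp only [LinearMap.add_apply, Module.End.one_apply, map_add, map_sub, AddMonoidHom.add_apply,
      AddMonoidHom.sub_apply, two_mul]
    abel
  have hsurj : Function.Surjective ⇑(1 + X) := ((Module.End.isUnit_iff _).1 hX).2
  constructor
  · intro h a b
    have := key a b
    rw [← hcayley, ← hcayley, h, sub_self, zero_eq_neg] at this
    exact (mul_eq_zero.1 this).resolve_left h2
  · intro h u u'
    obtain ⟨a, rfl⟩ := hsurj u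
    obtain ⟨b, rfl⟩ := hsurj u'
    rw [hcayley, hcayley, ← sub_eq_zero, key, h, mul_zero, neg_zero]

section Hermitian

variable {E V : Type*} [CommRing E] (τ : E →+* E) {ε : E} {B : V → V → E}

lemma add_right_of_hermitian [Add V] (haddl : ∀ u u' u'' : V, B (u + u') u'' = B u u'' + B u' u'')
    (hherm : ∀ u u' : V, B u u' = ε * τ (B u' u)) (u u' u'' : V) :
    B u (u' + u'') = B u u' + B u u'' := by
  rw [hherm, haddl, map_add, mul_add, ← hherm, ← hherm]

lemma smul_right_of_hermitian [SMul E V] (hsmull : ∀ (c : E) (u u' : V), B (c • u) u' = c * B u u')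
    (hherm : ∀ u u' : V, B u u' = ε * τ (B u' u)) (c : E) (u u' : V) :
    B u (c • u') = τ c * B u u' := by
  rw [hherm, hsmull, map_mul, mul_left_comm, ← hherm]

lemma skew_smul_iff [AddCommGroup V] [Module E V] [NoZeroDivisors E]
    (hsmull : ∀ (c : E) (u u' : V), B (c • u) u' = c * B u u')
    (hsmulr : ∀ (c : E) (u u' : V), B u (c • u') = τ c * B u u')
    {c : E} (hc0 : c ≠ 0) (hτc : τ c = c) (Y : Module.End E V) :
    (∀ u u', B ((c • Y) u) u' + B u ((c • Y) u') = 0) ↔ ∀ u u', B (Y u) u' + B u (Y u') = 0 := by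
  have hfactor : ∀ u u', B ((c • Y) u) u' + B u ((c • Y) u') = c * (B (Y u) u' + B u (Y u')) :=
    fun u u' => by rw [LinearMap.smul_apply, LinearMap.smul_apply, hsmull, hsmulr, hτc, mul_add]
  simp only [hfactor, mul_eq_zero, hc0, false_or]

end Hermitian

section Lattice

variable {E V Γ : Type*} [Field E] [AddCommGroup V] [Module E V]
  [LinearOrderedCommGroupWithZero Γ] {w : Valuation E Γ}

lemma Valuation.mem_jacobson_bot_integer {c : w.integer} (hc : w c < 1) :
    c ∈ (⊥ : Ideal w.integer).jacobson := by
  refine Ideal.mem_jacobson_bot.2 fun y => (Valuation.integer.integers w).isUnit_of_one' ?_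
  have hcy : w (c * y) < 1 := by
    rw [map_mul]
    exact mul_lt_one_of_lt_of_le hc y.2
  show w ((c : E) * y + 1) = 1
  rw [add_comm]
  exact w.map_one_add_of_lt hcy

lemma smul_apply_mem_of_le_one {M : Submodule w.integer V} {Z : Module.End E V}
    (hZ : ∀ x ∈ M, Z x ∈ M) {a : E} (ha : w a ≤ 1) : ∀ x ∈ M, (a • Z) x ∈ M :=
  fun x hx => M.smul_mem (⟨a, ha⟩ : w.integer) (hZ x hx)

lemma exists_fg_toAddSubgroup_eq {L : AddSubgroup V} (hLsmul : ∀ c : E, w c ≤ 1 → ∀ x ∈ L, c • x ∈ L)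
    (s : Finset V) (hsL : ∀ x ∈ s, x ∈ L)
    (hLfg : ∀ x ∈ L, ∃ c : V → E, (∀ i ∈ s, w (c i) ≤ 1) ∧ x = ∑ i ∈ s, c i • i) :
    ∃ M : Submodule w.integer V, M.FG ∧ M.toAddSubgroup = L := by
  refine ⟨{ L with smul_mem' := fun a x hx => hLsmul a a.2 x hx }, ⟨s, ?_⟩, rfl⟩
  refine le_antisymm (Submodule.span_le.2 hsL) fun x hx => ?_
  obtain ⟨a, ha, rfl⟩ := hLfg x hx
  exact Submodule.sum_mem _ fun i hi =>
    Submodule.smul_mem _ (⟨a i, ha i hi⟩ : w.integer) (Submodule.subset_span hi)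

lemma exists_mem_one_add_smul_apply_eq {M : Submodule w.integer V} (hM : M.FG)
    {A : Module.End E V} (hA : ∀ x ∈ M, A x ∈ M) {c : E} (hc : w c < 1) :
    ∀ x ∈ M, ∃ y ∈ M, (1 + c • A) y = x := by
  let c' : w.integer := ⟨c, hc.le⟩
  let f := (1 + c • A).restrictScalars w.integer
  have hle : M ≤ M.map f ⊔ Ideal.span {c'} • M := by
    intro x hx
    have hx' : x = f x - c' • A x := by
      simp only [f, LinearMap.restrictScalars_apply, LinearMap.add_apply, Module.End.one_apply,
        LinearMap.smul_apply]
      exact (add_sub_cancel_right _ _).symm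
    rw [hx']
    exact Submodule.sub_mem_sup ⟨x, hx, rfl⟩
      (Submodule.smul_mem_smul (Ideal.mem_span_singleton_self c') (hA x hx))
  have hle_map := Submodule.le_of_le_smul_of_le_jacobson_bot hM
    ((Ideal.span_singleton_le_iff_mem _).2 (Valuation.mem_jacobson_bot_integer hc)) hle
  intro x hx
  obtain ⟨y, hy, rfl⟩ := hle_map hx
  exact ⟨y, hy, rfl⟩

variable [FiniteDimensional E V] {M : Submodule w.integer V}

lemma isUnit_one_add_smul_of_lt_one (hM : M.FG) (hspan : Submodule.span E (M : Set V) = ⊤)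
    {A : Module.End E V} (hA : ∀ x ∈ M, A x ∈ M) {c : E} (hc : w c < 1) :
    IsUnit (1 + c • A) ∧ ∀ x ∈ M, (1 + c • A)⁻¹ʳ x ∈ M := by
  have hpre := exists_mem_one_add_smul_apply_eq hM hA hc
  have hunit : IsUnit (1 + c • A) := by
    rw [LinearMap.isUnit_iff_range_eq_top, eq_top_iff, ← hspan, Submodule.span_le]
    intro x hx
    obtain ⟨y, -, rfl⟩ := hpre x hx
    exact LinearMap.mem_range_self _ y
  refine ⟨hunit, fun x hx => ?_⟩
  obtain ⟨y, hy, rfl⟩ := hpre x hx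
  rwa [← Module.End.mul_apply, Ring.inverse_mul_cancel _ hunit]

lemma cayley_smul_mem (hM : M.FG) (hspan : Submodule.span E (M : Set V) = ⊤)
    {A : Module.End E V} (hA : ∀ x ∈ M, A x ∈ M) {c : E} (hc : w c < 1) :
    IsUnit (1 + c • A) ∧ ∃ Z : Module.End E V, (∀ x ∈ M, Z x ∈ M) ∧ cayley (c • A) = 1 + c • Z := by
  obtain ⟨hunit, hG⟩ := isUnit_one_add_smul_of_lt_one hM hspan hA hc
  refine ⟨hunit, -(2 * A * (1 + c • A)⁻¹ʳ), fun x hx => ?_, ?_⟩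
  · simp only [LinearMap.neg_apply, Module.End.mul_apply, two_mul, LinearMap.add_apply]
    exact M.neg_mem (M.add_mem (hA _ (hG x hx)) (hA _ (hG x hx)))
  · rw [cayley, eq_comm, Ring.eq_mul_inverse_iff_mul_eq _ _ _ hunit]
    calc (1 + c • -(2 * A * (1 + c • A)⁻¹ʳ)) * (1 + c • A)
        = 1 + c • A - c • (2 * A * ((1 + c • A)⁻¹ʳ * (1 + c • A))) := by
          simp only [add_mul, one_mul, smul_mul_assoc, neg_mul, mul_assoc, smul_neg]
          abel
      _ = 1 - c • A := by
          rw [Ring.inverse_mul_cancel _ hunit, mul_one, two_mul]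
          module

lemma cayley_one_add_smul_mem (hM : M.FG) (hspan : Submodule.span E (M : Set V) = ⊤)
    (h2 : w (2 : E) = 1) {Z : Module.End E V} (hZ : ∀ x ∈ M, Z x ∈ M) {c : E} (hc : w c < 1) :
    IsUnit (1 + (1 + c • Z)) ∧
      ∃ Y : Module.End E V, (∀ x ∈ M, Y x ∈ M) ∧ cayley (1 + c • Z) = c • Y := by
  have h2ne : (2 : E) ≠ 0 := fun h => by simp [h] at h2
  have h2inv : w (2⁻¹ : E) ≤ 1 := by rw [map_inv₀, h2, inv_one]
  obtain ⟨hunit, hG⟩ :=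
    isUnit_one_add_smul_of_lt_one hM hspan (smul_apply_mem_of_le_one hZ h2inv) hc
  set G := (1 + c • (2⁻¹ : E) • Z)⁻¹ʳ
  have hsum : 1 + (1 + c • Z) = (2 : E) • (1 + c • (2⁻¹ : E) • Z) := by
    rw [smul_add, smul_comm c, smul_smul, mul_inv_cancel₀ h2ne, one_smul, two_smul, add_assoc]
  have hunit' : IsUnit (1 + (1 + c • Z)) := by
    rw [hsum, Algebra.smul_def]
    exact (h2ne.isUnit.map _).mul hunit
  refine ⟨hunit', -((2⁻¹ : E) • (Z * G)), fun x hx => ?_, ?_⟩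
  · simp only [LinearMap.neg_apply, LinearMap.smul_apply, Module.End.mul_apply]
    exact M.neg_mem (smul_apply_mem_of_le_one hZ h2inv _ (hG x hx))
  · rw [cayley, eq_comm, Ring.eq_mul_inverse_iff_mul_eq _ _ _ hunit', hsum]
    calc c • -((2⁻¹ : E) • (Z * G)) * (2 : E) • (1 + c • (2⁻¹ : E) • Z)
        = -(c • (Z * (G * (1 + c • (2⁻¹ : E) • Z)))) := by
          simp only [smul_neg, neg_mul, smul_mul_assoc, mul_smul_comm, smul_smul, mul_assoc]
          rw [mul_left_comm, mul_inv_cancel₀ h2ne, mul_one]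
      _ = 1 - (1 + c • Z) := by
          rw [Ring.inverse_mul_cancel _ hunit, mul_one]
          abel

end Lattice

theorem classical_cayley_bijection_on_lattice_general
    {F E V Γ₀ Γ₁ : Type*} [Field F] [Field E] [Algebra F E]
    [AddCommGroup V] [Module E V] [FiniteDimensional E V]
    [LinearOrderedCommGroupWithZero Γ₀] [LinearOrderedCommGroupWithZero Γ₁]
    (v : Valuation F Γ₀) (w : Valuation E Γ₁)
    (hcompat : ∀ x : F, w (algebraMap F E x) ≤ 1 ↔ v x ≤ 1)
    (hodd : v (2 : F) = 1)
    (ϖ : F) (hϖ0 : ϖ ≠ 0) (hϖ1 : v ϖ < 1)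
    (τ : E →+* E)
    (hτF : ∀ x : F, τ (algebraMap F E x) = algebraMap F E x)
    (ε : E)
    (B : V → V → E)
    (haddl : ∀ u u' u'' : V, B (u + u') u'' = B u u'' + B u' u'')
    (hsmull : ∀ (c : E) (u u' : V), B (c • u) u' = c * B u u')
    (hherm : ∀ u u' : V, B u u' = ε * τ (B u' u))
    (L : AddSubgroup V)
    (hLsmul : ∀ c : E, w c ≤ 1 → ∀ x ∈ L, c • x ∈ L)
    (hLspan : Submodule.span E (L : Set V) = ⊤)
    (s : Finset V) (hsL : ∀ x ∈ s, x ∈ L)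
    (hLfg : ∀ x ∈ L, ∃ c : V → E, (∀ i ∈ s, w (c i) ≤ 1) ∧ x = ∑ i ∈ s, c i • i)
    (k : ℕ) (hk : 1 ≤ k) :
    Set.BijOn
      (fun X : V →ₗ[E] V => (1 - X) * Ring.inverse (1 + X))
      -- the set ϖ^k 𝓛̈ :
      {X : V →ₗ[E] V | ∃ Y : V →ₗ[E] V,
        (∀ x ∈ L, Y x ∈ L) ∧
        (∀ u u' : V, B (Y u) u' + B u (Y u') = 0) ∧
        X = (algebraMap F E (ϖ ^ k)) • Y}
      -- the set (1 + ϖ^k 𝓛̂) ∩ U(V) :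
      {g : V →ₗ[E] V |
        (∃ Z : V →ₗ[E] V, (∀ x ∈ L, Z x ∈ L) ∧
          g = 1 + (algebraMap F E (ϖ ^ k)) • Z) ∧
        ∀ u u' : V, B (g u) (g u') = B u u'} := by
  show Set.BijOn cayley _ _
  obtain ⟨M, hM, rfl⟩ := exists_fg_toAddSubgroup_eq hLsmul s hsL hLfg
  set c : E := algebraMap F E (ϖ ^ k)
  have hequiv : v.IsEquiv (w.comap (algebraMap F E)) :=
    Valuation.isEquiv_iff_val_le_one.2 fun {x} => (hcompat x).symm
  have hc : w c < 1 := hequiv.lt_one_iff_lt_one.1 <| by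
    rw [map_pow]
    exact pow_lt_one₀ zero_le hϖ1 (Nat.one_le_iff_ne_zero.1 hk)
  have h2 : w (2 : E) = 1 := by
    have := hequiv.eq_one_iff_eq_one.1 hodd
    rwa [Valuation.comap_apply, map_ofNat] at this
  have h2ne : (2 : E) ≠ 0 := fun h => by simp [h] at h2
  have h2unit : IsUnit (2 : Module.End E V) :=
    map_ofNat (algebraMap E (Module.End E V)) 2 ▸ h2ne.isUnit.map _
  let B' : V →+ V →+ E := AddMonoidHom.mk'
    (fun u => AddMonoidHom.mk' (B u) (add_right_of_hermitian τ haddl hherm u))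
    fun u u' => AddMonoidHom.ext (haddl u u')
  have hskew_smul := skew_smul_iff τ hsmull (smul_right_of_hermitian τ hsmull hherm)
    ((map_ne_zero _).2 (pow_ne_zero k hϖ0)) (hτF (ϖ ^ k))
  refine Set.InvOn.bijOn (f' := cayley) ⟨?_, ?_⟩ ?_ ?_
  · rintro _ ⟨Y, hY, -, rfl⟩
    exact cayley_cayley h2unit (cayley_smul_mem hM hLspan hY hc).1
  · rintro _ ⟨⟨Z, hZ, rfl⟩, -⟩
    exact cayley_cayley h2unit (cayley_one_add_smul_mem hM hLspan h2 hZ hc).1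
  · rintro _ ⟨Y, hY, hY_skew, rfl⟩
    obtain ⟨hunit, Z, hZ, hcayley⟩ := cayley_smul_mem hM hLspan hY hc
    exact ⟨⟨Z, hZ, hcayley⟩, (isometry_cayley_iff h2ne B' hunit).2 ((hskew_smul Y).2 hY_skew)⟩
  · rintro _ ⟨⟨Z, hZ, rfl⟩, hiso⟩
    obtain ⟨hunit, Y, hY, hcayley⟩ := cayley_one_add_smul_mem hM hLspan h2 hZ hc
    refine ⟨Y, hY, (hskew_smul Y).1 ?_, hcayley⟩
    rw [← hcayley]
    exact (isometry_cayley_iff h2ne B' (isUnit_one_add_cayley h2unit hunit)).1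
      (by rwa [cayley_cayley h2unit hunit])

theorem classical_cayley_bijection_on_lattice
    {F E V Γ₀ Γ₁ : Type*} [Field F] [Field E] [Algebra F E]
    [AddCommGroup V] [Module E V] [FiniteDimensional E V] [Nontrivial V]
    [LinearOrderedCommGroupWithZero Γ₀] [LinearOrderedCommGroupWithZero Γ₁]
    (hFE : Module.finrank F E ≤ 2)
    (v : Valuation F Γ₀) (w : Valuation E Γ₁)
    (hcompat : ∀ x : F, w (algebraMap F E x) ≤ 1 ↔ v x ≤ 1)
    (hodd : v (2 : F) = 1)
    (ϖ : F) (hϖ0 : ϖ ≠ 0) (hϖ1 : v ϖ < 1) (hϖ2 : ∀ x : F, v x < 1 → v x ≤ v ϖ)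
    (τ : E →+* E) (hτ : ∀ a : E, τ (τ a) = a) (hτw : ∀ a : E, w (τ a) = w a)
    (hτF : ∀ x : F, τ (algebraMap F E x) = algebraMap F E x)
    (ε : E) (hε : ε = 1 ∨ ε = -1)
    (B : V → V → E)
    (haddl : ∀ u u' u'' : V, B (u + u') u'' = B u u'' + B u' u'')
    (hsmull : ∀ (c : E) (u u' : V), B (c • u) u' = c * B u u')
    (hherm : ∀ u u' : V, B u u' = ε * τ (B u' u))
    (hnd : ∀ u : V, (∀ u' : V, B u u' = 0) → u = 0)
    (L : AddSubgroup V)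
    (hLsmul : ∀ c : E, w c ≤ 1 → ∀ x ∈ L, c • x ∈ L)
    (hLspan : Submodule.span E (L : Set V) = ⊤)
    (s : Finset V) (hsL : ∀ x ∈ s, x ∈ L)
    (hLfg : ∀ x ∈ L, ∃ c : V → E, (∀ i ∈ s, w (c i) ≤ 1) ∧ x = ∑ i ∈ s, c i • i)
    (k : ℕ) (hk : 1 ≤ k) :
    Set.BijOn
      (fun X : V →ₗ[E] V => (1 - X) * Ring.inverse (1 + X))
      -- the set ϖ^k 𝓛̈ :
      {X : V →ₗ[E] V | ∃ Y : V →ₗ[E] V,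
        (∀ x ∈ L, Y x ∈ L) ∧
        (∀ u u' : V, B (Y u) u' + B u (Y u') = 0) ∧
        X = (algebraMap F E (ϖ ^ k)) • Y}
      -- the set (1 + ϖ^k 𝓛̂) ∩ U(V) :
      {g : V →ₗ[E] V |
        (∃ Z : V →ₗ[E] V, (∀ x ∈ L, Z x ∈ L) ∧
          g = 1 + (algebraMap F E (ϖ ^ k)) • Z) ∧
        ∀ u u' : V, B (g u) (g u') = B u u'} :=
  classical_cayley_bijection_on_lattice_general v w hcompat hodd ϖ hϖ0 hϖ1 τ hτF ε B haddl hsmull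
    hherm L hLsmul hLspan s hsL hLfg k hk
end

section
/- Suppose every element a of a group G can be written a = h₁h₂ where h₁ is an anti-unitary involution (h₁² = 1) and h₂ an anti-unitary similitude with h₂² = μ(a). Fix an anti-unitary involution h and define θ(a) = μ(a)·h·a^{-1}·h^{-1} on GU(V). Then for every a ∈ GU(V), the element x = h·h₁ lies in U(V), satisfies θ(x) = x, and x·a·x^{-1} = θ(a). -/
/- STATEMENT 12: Suppose a ∈ GU(V) (with multiplier μ) factors as a = h₁h₂ with
h₁ an anti-unitary involution and h₂ an anti-unitary similitude with h₂² = μ.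
Fix an anti-unitary involution h and set θ(a) = μ(a)·h·a⁻¹·h⁻¹ on GU(V).
Then x = h·h₁ lies in U(V) (it is E-linear and an isometry of the form),
θ(x) = x, and x·a·x⁻¹ = θ(a).  Anti-unitary maps are additive bijections that
are τ-semilinear and reverse the form: B (h v) (h v') = B v' v. -/
theorem theta_conjugation_via_antiunitary_factorization
    {E V : Type*} [Field E] [AddCommGroup V] [Module E V]
    [FiniteDimensional E V] [Nontrivial V]
    (τ : E →+* E) (hτ : ∀ a : E, τ (τ a) = a)
    (ε : E) (hε : ε = 1 ∨ ε = -1)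
    (B : V → V → E)
    (haddl : ∀ u v w : V, B (u + v) w = B u w + B v w)
    (hsmull : ∀ (c : E) (v w : V), B (c • v) w = c * B v w)
    (hherm : ∀ v w : V, B v w = ε * τ (B w v))
    (hnd : ∀ v : V, (∀ w : V, B v w = 0) → v = 0)
    -- the fixed anti-unitary involution h :
    (h : V ≃+ V)
    (hsemil : ∀ (c : E) (x : V), h (c • x) = τ c • h x)
    (hanti : ∀ v w : V, B (h v) (h w) = B w v)
    (hinvol : ∀ x : V, h (h x) = x)
    -- the element a of GU(V) with multiplier μ :
    (a : V ≃ₗ[E] V) (μ : E)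
    (ha : ∀ v w : V, B (a v) (a w) = μ * B v w)
    -- the factorization a = h₁ h₂ of Theorem A :
    (h₁ h₂ : V ≃+ V)
    (h₁semil : ∀ (c : E) (x : V), h₁ (c • x) = τ c • h₁ x)
    (h₁anti : ∀ v w : V, B (h₁ v) (h₁ w) = B w v)
    (h₁invol : ∀ x : V, h₁ (h₁ x) = x)
    (h₂semil : ∀ (c : E) (x : V), h₂ (c • x) = τ c • h₂ x)
    (h₂anti : ∃ β : E, ∀ v w : V, B (h₂ v) (h₂ w) = β * B w v)
    (h₂sq : ∀ x : V, h₂ (h₂ x) = μ • x)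
    (hfact : ∀ x : V, a x = h₁ (h₂ x)) :
    -- x = h·h₁ is E-linear :
    (∀ (c : E) (x : V), h (h₁ (c • x)) = c • h (h₁ x)) ∧
    -- x = h·h₁ lies in U(V) :
    (∀ v w : V, B (h (h₁ v)) (h (h₁ w)) = B v w) ∧
    -- θ(x) = x, i.e. h·x⁻¹·h⁻¹ = x (note μ(x) = 1, h⁻¹ = h, x⁻¹ = h₁·h) :
    (∀ x : V, h (h₁ (h (h x))) = h (h₁ x)) ∧
    -- x·a·x⁻¹ = θ(a) = μ·h·a⁻¹·h⁻¹ :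
    (∀ x : V, h (h₁ (a (h₁ (h x)))) = μ • h (a.symm (h x))) := by

  have hμfix : τ μ = μ := by
    obtain ⟨v, hv⟩ := exists_ne (0 : V)
    have hw : ∃ w, B v w ≠ 0 := by
      by_contra hc
      push_neg at hc
      exact hv (hnd v hc)
    obtain ⟨w, hw⟩ := hw
    have e4 : B v w = ε * τ (B w v) := hherm v w
    have e5 : μ * B v w = ε * (τ μ * τ (B w v)) := by
      have e1 : B (a v) (a w) = μ * B v w := ha v w
      have e2 : B (a v) (a w) = ε * τ (B (a w) (a v)) := hherm _ _
      have e3 : B (a w) (a v) = μ * B w v := ha w v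
      rw [← e1, e2, e3, map_mul]
    have hτB : ε * τ (B w v) ≠ 0 := by rw [← e4]; exact hw
    have key : μ * (ε * τ (B w v)) = τ μ * (ε * τ (B w v)) := by
      linear_combination e5 - μ * e4
    exact (mul_right_cancel₀ hτB key).symm
  refine ⟨fun c x => by rw [h₁semil, hsemil, hτ],
    fun v w => by rw [hanti, h₁anti],
    fun x => by rw [hinvol], fun x => ?_⟩
  have key : h₂ (h₁ (h x)) = μ • a.symm (h x) := by
    have e : h₁ (h₂ (a.symm (h x))) = h x := by
      rw [← hfact]; exact a.apply_symm_apply _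
    have e2 := congrArg h₁ e
    rw [h₁invol] at e2
    have e3 := congrArg h₂ e2
    rw [h₂sq] at e3; exact e3.symm
  calc h (h₁ (a (h₁ (h x)))) = h (h₂ (h₁ (h x))) := by rw [hfact, h₁invol]
    _ = μ • h (a.symm (h x)) := by rw [key, hsemil, hμfix]
end

section
/- Let h be an anti-unitary involution, θ(X) = α(X) − hXh^{-1} on gu(V), and c the similitude Cayley map. Then for any X in the domain g₁ = {X ∈ gu(V) : 1+α(X) ≠ 0, det(1+X) ≠ 0, det(1+α(X)−X) ≠ 0}, θ(X) ∈ g₁ and θ(c(X)) = c(θ(X)), where θ on GU(V) is θ(g) = μ(g)·h·g^{-1}·h^{-1}. -/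
/-- Auxiliary: uniqueness of `Ring.inverse`. -/
theorem aux_ring_inverse_eq {M : Type*} [MonoidWithZero M] {a b : M}
    (h1 : a * b = 1) (h2 : b * a = 1) : Ring.inverse a = b := by
  have hu : IsUnit a := isUnit_iff_exists.mpr ⟨b, h1, h2⟩
  calc Ring.inverse a = Ring.inverse a * (a * b) := by rw [h1, mul_one]
    _ = (Ring.inverse a * a) * b := by rw [mul_assoc]
    _ = b := by rw [Ring.inverse_mul_cancel a hu, one_mul]

/-- Conjugation by an anti-linear involution, as a linear map. -/
def auxConj {E V : Type*} [Field E] [AddCommGroup V] [Module E V]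
    (τ : E →+* E) (hτ : ∀ c : E, τ (τ c) = c)
    (h : V ≃+ V) (hsemil : ∀ (c : E) (x : V), h (c • x) = τ c • h x)
    (f : V →ₗ[E] V) : V →ₗ[E] V where
  toFun x := h (f (h x))
  map_add' a b := by simp
  map_smul' c x := by simp [hsemil, hτ]

@[simp] theorem auxConj_apply {E V : Type*} [Field E] [AddCommGroup V] [Module E V]
    (τ : E →+* E) (hτ : ∀ c : E, τ (τ c) = c)
    (h : V ≃+ V) (hsemil : ∀ (c : E) (x : V), h (c • x) = τ c • h x)
    (f : V →ₗ[E] V) (x : V) : auxConj τ hτ h hsemil f x = h (f (h x)) := rfl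

theorem theta_commutes_with_cayley
    {E V : Type*} [Field E] [AddCommGroup V] [Module E V]
    [FiniteDimensional E V] [Nontrivial V]
    (hchar : (2 : E) ≠ 0)
    (τ : E →+* E) (hτ : ∀ c : E, τ (τ c) = c)
    (ε : E) (hε : ε = 1 ∨ ε = -1)
    (B : V → V → E)
    (haddl : ∀ u v w : V, B (u + v) w = B u w + B v w)
    (hsmull : ∀ (c : E) (v w : V), B (c • v) w = c * B v w)
    (hherm : ∀ v w : V, B v w = ε * τ (B w v))
    (hnd : ∀ v : V, (∀ w : V, B v w = 0) → v = 0)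
    (adj : (V →ₗ[E] V) → (V →ₗ[E] V))
    (hadj : ∀ (f : V →ₗ[E] V) (v w : V), B (f v) w = B v (adj f w))
    -- the anti-unitary involution h :
    (h : V ≃+ V)
    (hsemil : ∀ (c : E) (x : V), h (c • x) = τ c • h x)
    (hanti : ∀ v w : V, B (h v) (h w) = B w v)
    (hinvol : ∀ x : V, h (h x) = x)
    -- X ∈ g₁ with similitude character α ∈ F (τ-fixed) :
    (X : V →ₗ[E] V) (α : E) (hατ : τ α = α)
    (hX : X + adj X = α • (1 : V →ₗ[E] V))
    (hα : (1 : E) + α ≠ 0)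
    (hXinv : IsUnit ((1 : V →ₗ[E] V) + X))
    (hXinv' : IsUnit (α • (1 : V →ₗ[E] V) + 1 - X))
    -- θX given pointwise by θ(X) = α·1 − h·X·h⁻¹ (here h⁻¹ = h) :
    (tX : V →ₗ[E] V)
    (htX : ∀ x : V, tX x = α • x - h (X (h x))) :
    -- θ(X) ∈ g₁ :
    ((tX + adj tX = α • (1 : V →ₗ[E] V)) ∧
      IsUnit ((1 : V →ₗ[E] V) + tX) ∧
      IsUnit (α • (1 : V →ₗ[E] V) + 1 - tX)) ∧
    -- θ(c(X)) = c(θ(X)) pointwise, θ(c X) = (1+α)⁻²·h·(c X)⁻¹·h⁻¹ :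
    (∀ x : V,
      (((1 + α)⁻¹ : E) ^ 2) •
          h ((Ring.inverse ((1 - ((1 + α)⁻¹ : E) • X) * Ring.inverse (1 + X))) (h x)) =
        ((1 - ((1 + α)⁻¹ : E) • tX) * Ring.inverse (1 + tX)) x) := by
  set Φ := auxConj τ hτ h hsemil with hΦ
  have hτinj : Function.Injective τ := τ.injective
  have hτε : τ ε = ε := by rcases hε with rfl | rfl <;> simp
  have hεε : ε * ε = 1 := by rcases hε with rfl | rfl <;> norm_num
  -- bilinearity in the second slot
  have haddr : ∀ u v w : V, B u (v + w) = B u v + B u w := by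
    intro u v w
    rw [hherm u (v + w), haddl, map_add, mul_add, ← hherm, ← hherm]
  have hsmulr : ∀ (c : E) (v w : V), B v (c • w) = τ c * B v w := by
    intro c v w
    rw [hherm v (c • w), hsmull, map_mul, hherm v w]; ring
  have hsubr : ∀ u v w : V, B u (v - w) = B u v - B u w := by
    intro u v w
    have : v - w = v + (-1 : E) • w := by rw [neg_one_smul]; abel
    rw [this, haddr, hsmulr]
    simp only [map_neg, map_one]
    ring
  have hsubl : ∀ u v w : V, B (u - v) w = B u w - B v w := by
    intro u v w
    have : u - v = u + (-1 : E) • v := by rw [neg_one_smul]; abel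
    rw [this, haddl, hsmull]; ring
  -- nondegeneracy in the second slot
  have hεne : ε ≠ 0 := by rcases hε with rfl | rfl <;> simp
  have hndr : ∀ w : V, (∀ v : V, B v w = 0) → w = 0 := by
    intro w hw
    refine hnd w (fun v => ?_)
    have := hw v
    rw [hherm v w] at this
    have h2 : τ (B w v) = 0 := by
      rcases mul_eq_zero.mp this with h' | h'
      · exact absurd h' hεne
      · exact h'
    exact hτinj (by simp [h2])
  -- uniqueness of adjoints
  have adj_eq : ∀ f g : V →ₗ[E] V, (∀ v w : V, B (f v) w = B v (g w)) → adj f = g := by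
    intro f g hfg
    ext w
    have hz : ∀ v : V, B v (adj f w - g w) = 0 := by
      intro v
      rw [hsubr, ← hadj, hfg, sub_self]
    have := hndr _ hz
    exact sub_eq_zero.mp this
  -- Φ is a ring homomorphism
  have Φ_mul : ∀ f g : V →ₗ[E] V, Φ (f * g) = Φ f * Φ g := by
    intro f g
    ext x
    simp [hΦ, Module.End.mul_apply, hinvol]
  have Φ_one : Φ 1 = 1 := by
    ext x; simp [hΦ, hinvol]
  have Φ_add : ∀ f g : V →ₗ[E] V, Φ (f + g) = Φ f + Φ g := by
    intro f g; ext x; simp [hΦ]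
  have Φ_smul : ∀ (c : E) (f : V →ₗ[E] V), Φ (c • f) = τ c • Φ f := by
    intro c f; ext x; simp [hΦ, hsemil]
  have Φ_smul_one : ∀ c : E, τ c = c → Φ (c • 1) = c • 1 := by
    intro c hc
    rw [Φ_smul, hc, Φ_one]
  -- the key adjoint computation: B (Φ f v) w = B v (Φ (adj f) w)
  have hconj : ∀ (f : V →ₗ[E] V) (v w : V), B (Φ f v) w = B v (Φ (adj f) w) := by
    intro f v w
    have e1 : B (Φ f v) w = B (h w) (f (h v)) := by
      rw [hΦ, auxConj_apply]
      conv_lhs => rw [← hinvol w]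
      exact hanti (f (h v)) (h w)
    have e2 : B (h v) (adj f (h w)) = B (Φ (adj f) w) v := by
      rw [hΦ, auxConj_apply]
      conv_lhs => rw [← hinvol (adj f (h w))]
      exact hanti v (h (adj f (h w)))
    rw [e1, hherm (h w) (f (h v)), hadj, e2, hherm (Φ (adj f) w) v, map_mul, hτε,
      hτ]
    rw [← mul_assoc, hεε, one_mul]
  -- tX as an operator
  have tXeq : tX = α • (1 : V →ₗ[E] V) - Φ X := by
    ext x; simp [htX, hΦ]
  -- adj tX
  have adj_tX : adj tX = α • (1 : V →ₗ[E] V) - Φ (adj X) := by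
    refine adj_eq _ _ (fun v w => ?_)
    have lhs : B (tX v) w = α * B v w - B v (Φ (adj X) w) := by
      rw [tXeq]
      simp only [LinearMap.sub_apply, LinearMap.smul_apply, Module.End.one_apply]
      rw [hsubl, hsmull, hconj]
    have rhs : B v ((α • (1 : V →ₗ[E] V) - Φ (adj X)) w)
        = α * B v w - B v (Φ (adj X) w) := by
      simp only [LinearMap.sub_apply, LinearMap.smul_apply, Module.End.one_apply]
      rw [hsubr, hsmulr, hατ]
    rw [lhs, rhs]
  -- part 1a
  have part1a : tX + adj tX = α • (1 : V →ₗ[E] V) := by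
    rw [adj_tX, tXeq, sub_add_sub_comm, ← Φ_add, hX, Φ_smul_one α hατ,
      add_sub_cancel_right]
  -- Φ preserves units
  have Φ_isUnit : ∀ f : V →ₗ[E] V, IsUnit f → IsUnit (Φ f) := by
    intro f hf
    rcases isUnit_iff_exists.mp hf with ⟨g, hg1, hg2⟩
    exact isUnit_iff_exists.mpr ⟨Φ g, by rw [← Φ_mul, hg1, Φ_one],
      by rw [← Φ_mul, hg2, Φ_one]⟩
  -- key operator identities
  have e1tX : (1 : V →ₗ[E] V) + tX = Φ (α • (1 : V →ₗ[E] V) + 1 - X) := by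
    ext x
    simp [htX, hΦ, hsemil, hατ, hinvol, map_sub, map_add]
    abel
  have e2tX : α • (1 : V →ₗ[E] V) + 1 - tX = Φ (1 + X) := by
    ext x
    simp [htX, hΦ, hsemil, hατ, hinvol, map_sub, map_add]
  have part1b : IsUnit ((1 : V →ₗ[E] V) + tX) := by
    rw [e1tX]; exact Φ_isUnit _ hXinv'
  have part1c : IsUnit (α • (1 : V →ₗ[E] V) + 1 - tX) := by
    rw [e2tX]; exact Φ_isUnit _ hXinv
  refine ⟨⟨part1a, part1b, part1c⟩, ?_⟩
  -- part 2
  set β : E := (1 + α)⁻¹ with hβdef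
  have hβ : β * (1 + α) = 1 := inv_mul_cancel₀ hα
  have hβne : β ≠ 0 := inv_ne_zero hα
  set Y : V →ₗ[E] V := α • (1 : V →ₗ[E] V) + 1 - X with hYdef
  have hYu : IsUnit Y := hXinv'
  -- 1 - β•X = β • Y
  have f1 : (1 : V →ₗ[E] V) - β • X = β • Y := by
    rw [hYdef]
    match_scalars
    · linear_combination -hβ
    · ring
  -- inverses
  have hi1 : ((1 : V →ₗ[E] V) + X) * Ring.inverse (1 + X) = 1 :=
    Ring.mul_inverse_cancel _ hXinv
  have hi1' : Ring.inverse ((1 : V →ₗ[E] V) + X) * (1 + X) = 1 :=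
    Ring.inverse_mul_cancel _ hXinv
  have hiY : Y * Ring.inverse Y = 1 := Ring.mul_inverse_cancel _ hYu
  have hiY' : Ring.inverse Y * Y = 1 := Ring.inverse_mul_cancel _ hYu
  -- Ring.inverse of cX
  have hinvcX : Ring.inverse (((1 : V →ₗ[E] V) - β • X) * Ring.inverse (1 + X))
      = β⁻¹ • (((1 : V →ₗ[E] V) + X) * Ring.inverse Y) := by
    refine aux_ring_inverse_eq ?_ ?_
    · rw [f1, smul_mul_assoc, smul_mul_assoc, mul_smul_comm, smul_smul,
        mul_inv_cancel₀ hβne, one_smul]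
      calc Y * Ring.inverse (1 + X) * ((1 + X) * Ring.inverse Y)
          = Y * (Ring.inverse (1 + X) * (1 + X)) * Ring.inverse Y := by
            rw [mul_assoc, mul_assoc, mul_assoc]
        _ = 1 := by rw [hi1', mul_one, hiY]
    · rw [f1, smul_mul_assoc, smul_mul_assoc, mul_smul_comm, smul_smul,
        inv_mul_cancel₀ hβne, one_smul]
      calc (1 + X) * Ring.inverse Y * (Y * Ring.inverse (1 + X))
          = (1 + X) * (Ring.inverse Y * Y) * Ring.inverse (1 + X) := by
            rw [mul_assoc, mul_assoc, mul_assoc]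
        _ = 1 := by rw [hiY', mul_one, hi1]
  -- Φ commutes with Ring.inverse on units
  have ΦRinv : ∀ f : V →ₗ[E] V, IsUnit f → Φ (Ring.inverse f) = Ring.inverse (Φ f) := by
    intro f hf
    refine (aux_ring_inverse_eq ?_ ?_).symm
    · rw [← Φ_mul, Ring.mul_inverse_cancel _ hf, Φ_one]
    · rw [← Φ_mul, Ring.inverse_mul_cancel _ hf, Φ_one]
  -- τ fixes β
  have hτβ : τ β = β := by
    rw [hβdef, map_inv₀, map_add, map_one, hατ]
  have hτβinv : τ β⁻¹ = β⁻¹ := by rw [map_inv₀, hτβ]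
  -- the RHS factorization : 1 - β • tX = β • Φ (1 + X)
  have f2 : (1 : V →ₗ[E] V) - β • tX = β • Φ (1 + X) := by
    rw [tXeq, Φ_add, Φ_one]
    match_scalars
    · linear_combination -hβ
    · ring
  -- main operator identity
  have main : (β ^ 2) • Φ (Ring.inverse (((1 : V →ₗ[E] V) - β • X) * Ring.inverse (1 + X)))
      = ((1 : V →ₗ[E] V) - β • tX) * Ring.inverse (1 + tX) := by
    rw [hinvcX, Φ_smul, hτβinv, Φ_mul, ΦRinv Y hYu, smul_smul, f2, e1tX,
      smul_mul_assoc]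
    congr 1
    rw [sq, mul_assoc, mul_inv_cancel₀ hβne, mul_one]
  intro x
  have := LinearMap.congr_fun main x
  simpa [hΦ] using this
end
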